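/- Let η > 0, T > 0, and let u, p be smooth, spatially ℤⁿ-periodic with div u_t = 0, solving the incompressible Navier–Stokes equation ∂_t u = −∇_u u − ∇p + ηΔu on [0,T] × ℝⁿ. Then the kinetic energy E_t = ½ ∫_{[0,1]ⁿ} |u(t,x)|² dx satisfies d/dt E_t = −η ∫_{[0,1]ⁿ} |Du(t,x)|² dx ≤ 0, where |Du|² is the squared Frobenius norm of the spatial Jacobian; in particular t ↦ E_t is monotone nonincreasing on [0,T]. -/

import Mathlib

noncomputable section
open MeasureTheory

/-- Euclidean dot product on `Fin n → ℝ`. -/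
def dotp {n : ℕ} (v w : Fin n → ℝ) : ℝ := ∑ i, v i * w i

/-- Advective derivative `(∇_X ξ)(x) = Dξ(x)·X(x)`. -/
def advDeriv {n : ℕ} (X ξ : (Fin n → ℝ) → (Fin n → ℝ)) (x : Fin n → ℝ) : Fin n → ℝ :=
  fderiv ℝ ξ x (X x)

/-- Line stretching term `(X'⊗ξ)(x) = (DX(x))ᵀ·ξ(x)`. -/
def lineStretch {n : ℕ} (X ξ : (Fin n → ℝ) → (Fin n → ℝ)) (x : Fin n → ℝ) : Fin n → ℝ :=
  fun i => ∑ j, fderiv ℝ X x (Pi.single i 1) j * ξ x j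

/-- Divergence of a vector field. -/
def diver {n : ℕ} (ξ : (Fin n → ℝ) → (Fin n → ℝ)) (x : Fin n → ℝ) : ℝ :=
  ∑ i, fderiv ℝ ξ x (Pi.single i 1) i

/-- Gradient of a scalar function. -/
def gradf {n : ℕ} (f : (Fin n → ℝ) → ℝ) (x : Fin n → ℝ) : Fin n → ℝ :=
  fun i => fderiv ℝ f x (Pi.single i 1)

/-- Componentwise Laplacian. -/
def lap {n : ℕ} (ξ : (Fin n → ℝ) → (Fin n → ℝ)) (x : Fin n → ℝ) : Fin n → ℝ :=
  ∑ j, fderiv ℝ (fun y => fderiv ℝ ξ y (Pi.single j 1)) x (Pi.single j 1)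

/-- The unit cube `[0,1]ⁿ`, realizing the torus `ℝⁿ/ℤⁿ`. -/
def cube (n : ℕ) : Set (Fin n → ℝ) := Set.univ.pi fun _ => Set.Icc (0:ℝ) 1

/-- `ℤⁿ`-periodicity. -/
def ZPeriodic {n : ℕ} {α : Type*} (f : (Fin n → ℝ) → α) : Prop :=
  ∀ (x : Fin n → ℝ) (m : Fin n → ℤ), f (x + fun i => (m i : ℝ)) = f x

/-!
Pair the equation with `u`. Over the cube every divergence integrates to zero, because the
boundary terms on opposite faces cancel by `ℤⁿ`-periodicity. Since `div u = 0`,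
`u · ∇_u u = ½ div (|u|² u)` and `u · ∇p = div (p u)`, while `u · Δu = div ((Du)ᵀ u) - |Du|²`.
Hence `∫ u · ∂ₜu = -η ∫ |Du|²`. To differentiate `E` under the integral sign, we integrate the
pointwise identity `∂ₜ(½|u|²) = u · ∂ₜu` in time and swap the two integrals (Fubini). This is
legitimate because `∂ₜu` is a partial derivative of the map `(t, x) ↦ u t x`, which is `C¹` on
`[0, T] × ℝⁿ`, so it is jointly continuous. The sign of the derivative gives monotonicity.
-/

open Set

section ParametricIntegral

variable {X E : Type*} [TopologicalSpace X] [MeasurableSpace X] [OpensMeasurableSpace X]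
  {μ : Measure X} [IsFiniteMeasureOnCompacts μ] [NormedAddCommGroup E] [NormedSpace ℝ E]
  {K : Set X}

theorem continuousOn_setIntegral_of_continuousOn_prod (hK : IsCompact K) (hKm : MeasurableSet K)
    {I : Set ℝ} (hI : IsCompact I) {g : ℝ → X → E}
    (hg : ContinuousOn (Function.uncurry g) (I ×ˢ K)) :
    ContinuousOn (fun τ => ∫ x in K, g τ x ∂μ) I := by
  obtain ⟨C, hC⟩ := (hI.prod hK).exists_bound_of_continuousOn hg
  have hslice : ∀ τ ∈ I, ContinuousOn (g τ) K := fun τ hτ =>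
    hg.comp (Continuous.prodMk_right τ).continuousOn fun x hx => ⟨hτ, hx⟩
  refine continuousOn_of_dominated (bound := fun _ => C)
    (fun τ hτ => (hslice τ hτ).aestronglyMeasurable_of_isCompact hK hKm)
    (fun τ hτ => (ae_restrict_iff' hKm).mpr (.of_forall fun x hx => hC (τ, x) ⟨hτ, hx⟩))
    (integrableOn_const hK.measure_ne_top) ((ae_restrict_iff' hKm).mpr (.of_forall ?_))
  exact fun x hx => hg.comp (Continuous.prodMk_left x).continuousOn fun τ hτ => ⟨hτ, hx⟩

variable [CompleteSpace E]

theorem intervalIntegral_eq_sub_of_hasDerivWithinAt_Icc {a b : ℝ} (hab : a ≤ b) {g g' : ℝ → E}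
    (hg : ∀ t ∈ Icc a b, HasDerivWithinAt g (g' t) (Icc a b) t)
    (hg' : ContinuousOn g' (Icc a b)) :
    ∫ τ in a..b, g' τ = g b - g a := by
  refine intervalIntegral.integral_eq_sub_of_hasDeriv_right_of_le hab
    (fun t ht => (hg t ht).continuousWithinAt) (fun t ht => ?_)
    (hg'.intervalIntegrable_of_Icc hab)
  exact ((hg t (Ioo_subset_Icc_self ht)).hasDerivAt (Icc_mem_nhds ht.1 ht.2)).hasDerivWithinAt

theorem setIntegral_sub_eq_intervalIntegral_setIntegral (hK : IsCompact K)
    (hKm : MeasurableSet K) {a b : ℝ} (hab : a ≤ b) {f f' : ℝ → X → E}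
    (hf : ∀ x ∈ K, ∀ t ∈ Icc a b, HasDerivWithinAt (f · x) (f' t x) (Icc a b) t)
    (hf' : ContinuousOn (Function.uncurry f') (Icc a b ×ˢ K))
    (hfa : IntegrableOn (f a) K μ) (hfb : IntegrableOn (f b) K μ) :
    ∫ x in K, f b x ∂μ - ∫ x in K, f a x ∂μ = ∫ τ in a..b, ∫ x in K, f' τ x ∂μ := by
  have hpointwise : ∀ x ∈ K, f b x - f a x = ∫ τ in a..b, f' τ x := fun x hx =>
    (intervalIntegral_eq_sub_of_hasDerivWithinAt_Icc hab (hf x hx)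
      (hf'.comp (Continuous.prodMk_left x).continuousOn fun τ hτ => ⟨hτ, hx⟩)).symm
  have : IsFiniteMeasure (μ.restrict K) := isFiniteMeasure_restrict.mpr hK.measure_ne_top
  have hprod : Integrable (Function.uncurry fun x τ => f' τ x)
      ((μ.restrict K).prod (volume.restrict (Ioc a b))) := by
    rw [← Measure.restrict_restrict_of_subset (subset_refl K), Measure.prod_restrict]
    refine IntegrableOn.mono_set ?_ (prod_mono subset_rfl Ioc_subset_Icc_self)
    exact (hf'.comp continuous_swap.continuousOn fun z hz => ⟨hz.2, hz.1⟩).integrableOn_compact'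
      (hK.prod isCompact_Icc) (hKm.prod measurableSet_Icc)
  rw [← integral_sub hfb hfa, setIntegral_congr_fun hKm hpointwise,
    intervalIntegral.integral_of_le hab]
  simp_rw [intervalIntegral.integral_of_le hab]
  exact integral_integral_swap hprod

theorem hasDerivWithinAt_setIntegral_Icc (hK : IsCompact K) (hKm : MeasurableSet K) {a b : ℝ}
    {f f' : ℝ → X → E}
    (hf : ∀ x ∈ K, ∀ t ∈ Icc a b, HasDerivWithinAt (f · x) (f' t x) (Icc a b) t)
    (hf' : ContinuousOn (Function.uncurry f') (Icc a b ×ˢ K))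
    (hfi : ∀ t ∈ Icc a b, IntegrableOn (f t) K μ) {t : ℝ} (ht : t ∈ Icc a b) :
    HasDerivWithinAt (fun τ => ∫ x in K, f τ x ∂μ) (∫ x in K, f' t x ∂μ) (Icc a b) t := by
  have ha : a ∈ Icc a b := ⟨le_rfl, ht.1.trans ht.2⟩
  have hG := continuousOn_setIntegral_of_continuousOn_prod (μ := μ) hK hKm isCompact_Icc hf'
  have hF : EqOn (fun τ => ∫ x in K, f τ x ∂μ)
      (fun τ => ∫ x in K, f a x ∂μ + ∫ s in a..τ, ∫ x in K, f' s x ∂μ) (Icc a b) := by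
    intro τ hτ
    have hsub : Icc a τ ⊆ Icc a b := Icc_subset_Icc le_rfl hτ.2
    dsimp only
    rw [← setIntegral_sub_eq_intervalIntegral_setIntegral hK hKm hτ.1
      (fun x hx s hs => (hf x hx s (hsub hs)).mono hsub)
      (hf'.mono (prod_mono hsub subset_rfl)) (hfi a ha) (hfi τ hτ), add_sub_cancel]
  have : Fact (t ∈ Icc a b) := ⟨ht⟩
  have hFTC := intervalIntegral.integral_hasDerivWithinAt_right (s := Icc a b) (t := Icc a b)
    ((hG.mono (Icc_subset_Icc le_rfl ht.2)).intervalIntegrable_of_Icc ht.1)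
    ⟨Icc a b, self_mem_nhdsWithin, hG.aestronglyMeasurable measurableSet_Icc⟩ (hG t ht)
  exact (hFTC.const_add _).congr hF (hF ht)

end ParametricIntegral

section DotProduct

variable {n : ℕ}

theorem dotp_eq_dotProduct (v w : Fin n → ℝ) : dotp v w = v ⬝ᵥ w := rfl

theorem dotp_self_nonneg (v : Fin n → ℝ) : 0 ≤ dotp v v :=
  Finset.sum_nonneg fun i _ => mul_self_nonneg (v i)

theorem ContinuousOn.dotp {X : Type*} [TopologicalSpace X] {v w : X → Fin n → ℝ} {S : Set X}
    (hv : ContinuousOn v S) (hw : ContinuousOn w S) :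
    ContinuousOn (fun y => _root_.dotp (v y) (w y)) S :=
  continuousOn_finsetSum _ fun i _ =>
    ((continuous_apply i).comp_continuousOn hv).mul ((continuous_apply i).comp_continuousOn hw)

theorem HasDerivWithinAt.dotp {v w : ℝ → Fin n → ℝ} {v' w' : Fin n → ℝ} {s : Set ℝ} {t : ℝ}
    (hv : HasDerivWithinAt v v' s t) (hw : HasDerivWithinAt w w' s t) :
    HasDerivWithinAt (fun τ => _root_.dotp (v τ) (w τ))
      (_root_.dotp v' (w t) + _root_.dotp (v t) w') s t := by
  have := HasDerivWithinAt.fun_sum (u := Finset.univ) fun i _ =>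
    (hasDerivWithinAt_pi.1 hv i).fun_mul (hasDerivWithinAt_pi.1 hw i)
  simpa only [_root_.dotp, Finset.sum_add_distrib] using this

theorem HasDerivWithinAt.half_dotp_self {v : ℝ → Fin n → ℝ} {v' : Fin n → ℝ} {s : Set ℝ}
    {t : ℝ} (hv : HasDerivWithinAt v v' s t) :
    HasDerivWithinAt (fun τ => 1 / 2 * _root_.dotp (v τ) (v τ)) (_root_.dotp (v t) v') s t := by
  have hvalue : _root_.dotp (v t) v'
      = 1 / 2 * (_root_.dotp v' (v t) + _root_.dotp (v t) v') := by
    rw [dotp_eq_dotProduct, dotp_eq_dotProduct, dotProduct_comm v']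
    ring
  rw [hvalue]
  exact (hv.dotp hv).const_mul (1 / 2)

variable {E : Type*} [NormedAddCommGroup E] [NormedSpace ℝ E]

theorem DifferentiableAt.dotp {v w : E → Fin n → ℝ} {x : E} (hv : DifferentiableAt ℝ v x)
    (hw : DifferentiableAt ℝ w x) : DifferentiableAt ℝ (fun y => _root_.dotp (v y) (w y)) x :=
  .fun_sum fun i _ => (differentiableAt_pi.1 hv i).fun_mul (differentiableAt_pi.1 hw i)

theorem ContDiff.dotp {k : WithTop ℕ∞} {v w : E → Fin n → ℝ} (hv : ContDiff ℝ k v)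
    (hw : ContDiff ℝ k w) : ContDiff ℝ k (fun y => _root_.dotp (v y) (w y)) :=
  .sum fun i _ => (contDiff_pi.1 hv i).mul (contDiff_pi.1 hw i)

theorem fderiv_dotp_apply {v w : E → Fin n → ℝ} {x : E} (hv : DifferentiableAt ℝ v x)
    (hw : DifferentiableAt ℝ w x) (d : E) :
    fderiv ℝ (fun y => dotp (v y) (w y)) x d
      = dotp (fderiv ℝ v x d) (w x) + dotp (v x) (fderiv ℝ w x d) := by
  have hvi := fun i => differentiableAt_pi.1 hv i
  have hwi := fun i => differentiableAt_pi.1 hw i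
  simp only [dotp]
  rw [fderiv_fun_sum fun i _ => (hvi i).fun_mul (hwi i), sum_apply, ← Finset.sum_add_distrib]
  refine Finset.sum_congr rfl fun i _ => ?_
  rw [fderiv_fun_mul (hvi i) (hwi i), fderiv_apply hv, fderiv_apply hw]
  simp only [add_apply, smul_apply, ContinuousLinearMap.comp_apply,
    ContinuousLinearMap.proj_apply, smul_eq_mul]
  ring

end DotProduct

section VectorCalculus

variable {n : ℕ}

theorem ContDiff.fderiv_right_apply {E F : Type*} [NormedAddCommGroup E] [NormedSpace ℝ E]
    [NormedAddCommGroup F] [NormedSpace ℝ F] {f : E → F} {m k : WithTop ℕ∞}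
    (hf : ContDiff ℝ k f) (hmk : m + 1 ≤ k) (d : E) :
    ContDiff ℝ m (fun y => fderiv ℝ f y d) :=
  (hf.fderiv_right hmk).clm_apply contDiff_const

theorem advDeriv_eq_sum (X ξ : (Fin n → ℝ) → (Fin n → ℝ)) (x : Fin n → ℝ) :
    advDeriv X ξ x = ∑ j, X x j • fderiv ℝ ξ x (Pi.single j 1) := by
  conv_lhs => rw [advDeriv, pi_eq_sum_univ' (X x)]
  simp only [map_sum, map_smul]

theorem lineStretch_apply (X ξ : (Fin n → ℝ) → (Fin n → ℝ)) (x : Fin n → ℝ) (i : Fin n) :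
    lineStretch X ξ x i = dotp (fderiv ℝ X x (Pi.single i 1)) (ξ x) := rfl

theorem dotp_advDeriv_self (v : (Fin n → ℝ) → (Fin n → ℝ)) (x : Fin n → ℝ) :
    dotp (v x) (advDeriv v v x) = dotp (v x) (lineStretch v v x) := by
  simp only [dotp, lineStretch, advDeriv_eq_sum, Finset.sum_apply, Pi.smul_apply, smul_eq_mul,
    Finset.mul_sum]
  rw [Finset.sum_comm]
  exact Finset.sum_congr rfl fun j _ => Finset.sum_congr rfl fun i _ => by ring

theorem gradf_dotp_self {v : (Fin n → ℝ) → (Fin n → ℝ)} {x : Fin n → ℝ}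
    (hv : DifferentiableAt ℝ v x) :
    gradf (fun y => dotp (v y) (v y)) x = 2 • lineStretch v v x := by
  funext i
  rw [gradf, fderiv_dotp_apply hv hv, dotp_eq_dotProduct (v x), dotProduct_comm, Pi.smul_apply,
    two_smul, lineStretch_apply]
  rfl

theorem diver_eq_sum_fderiv_apply {w : (Fin n → ℝ) → (Fin n → ℝ)} {x : Fin n → ℝ}
    (hw : DifferentiableAt ℝ w x) :
    diver w x = ∑ i, fderiv ℝ (fun y => w y i) x (Pi.single i 1) := by
  simp only [diver, fderiv_apply hw, ContinuousLinearMap.comp_apply,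
    ContinuousLinearMap.proj_apply]

theorem diver_smul {c : (Fin n → ℝ) → ℝ} {v : (Fin n → ℝ) → (Fin n → ℝ)} {x : Fin n → ℝ}
    (hc : DifferentiableAt ℝ c x) (hv : DifferentiableAt ℝ v x) :
    diver (fun y => c y • v y) x = c x * diver v x + dotp (gradf c x) (v x) := by
  simp only [diver, gradf, dotp, fderiv_fun_smul hc hv, add_apply, smul_apply,
    ContinuousLinearMap.smulRight_apply, Pi.add_apply, Pi.smul_apply, smul_eq_mul,
    Finset.sum_add_distrib, Finset.mul_sum]

theorem diver_lineStretch_self {v : (Fin n → ℝ) → (Fin n → ℝ)} (hv : ContDiff ℝ 2 v)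
    (x : Fin n → ℝ) :
    diver (lineStretch v v) x
      = ∑ i, dotp (fderiv ℝ v x (Pi.single i 1)) (fderiv ℝ v x (Pi.single i 1))
        + dotp (v x) (lap v x) := by
  have hv₁ : Differentiable ℝ v := hv.differentiable two_ne_zero
  have hdv : ∀ i : Fin n, Differentiable ℝ (fun y => fderiv ℝ v y (Pi.single i 1)) := fun i =>
    (hv.fderiv_right_apply (m := 1) le_rfl _).differentiable one_ne_zero
  have hLS : DifferentiableAt ℝ (lineStretch v v) x :=
    differentiableAt_pi.2 fun i => ((hdv i) x).dotp (hv₁ x)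
  rw [diver_eq_sum_fderiv_apply hLS]
  simp only [lineStretch_apply, fderiv_dotp_apply ((hdv _) x) (hv₁ x), Finset.sum_add_distrib]
  rw [add_comm, lap, dotp_eq_dotProduct (v x), dotProduct_comm, sum_dotProduct]
  rfl

theorem continuous_lap {v : (Fin n → ℝ) → (Fin n → ℝ)} (hv : ContDiff ℝ 2 v) :
    Continuous (lap v) :=
  continuous_finsetSum _ fun _ _ =>
    ((hv.fderiv_right_apply (m := 1) le_rfl _).continuous_fderiv one_ne_zero).clm_apply
      continuous_const

end VectorCalculus

section Torus

variable {n : ℕ}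

theorem ZPeriodic.fderiv {F : Type*} [NormedAddCommGroup F] [NormedSpace ℝ F]
    {f : (Fin n → ℝ) → F} (hf : ZPeriodic f) : ZPeriodic (_root_.fderiv ℝ f) := by
  intro x m
  rw [← fderiv_comp_add_right]
  exact congrArg (_root_.fderiv ℝ · x) (funext fun y => hf y m)

theorem ZPeriodic.insertNth_one {α : Type*} {f : (Fin (n + 1) → ℝ) → α}
    (hf : ZPeriodic f) (i : Fin (n + 1)) (x : Fin n → ℝ) :
    f (i.insertNth 1 x) = f (i.insertNth 0 x) := by
  have hshift : i.insertNth (1 : ℝ) x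
      = i.insertNth 0 x + fun j => ((Pi.single i 1 : Fin (n + 1) → ℤ) j : ℝ) := by
    funext j
    refine Fin.succAboveCases i ?_ (fun k => ?_) j
    · simp
    · simp [Pi.single_apply, Fin.succAbove_ne i k]
  rw [hshift, hf]

theorem cube_eq_Icc (n : ℕ) : cube n = Icc 0 1 := by
  rw [cube, ← pi_univ_Icc]
  rfl

theorem isCompact_cube (n : ℕ) : IsCompact (cube n) :=
  cube_eq_Icc n ▸ isCompact_Icc

theorem measurableSet_cube (n : ℕ) : MeasurableSet (cube n) :=
  cube_eq_Icc n ▸ measurableSet_Icc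

theorem Continuous.integrableOn_cube {E : Type*} [NormedAddCommGroup E] {g : (Fin n → ℝ) → E}
    (hg : Continuous g) : IntegrableOn g (cube n) :=
  cube_eq_Icc n ▸ hg.integrableOn_Icc

theorem integral_cube_diver_eq_zero {f : (Fin n → ℝ) → (Fin n → ℝ)}
    (hf : ContDiff ℝ 1 f) (hper : ZPeriodic f) : ∫ x in cube n, diver f x = 0 := by
  cases n with
  | zero => simp [diver]
  | succ m =>
    have hdiv : Continuous (diver f) := continuous_finsetSum _ fun i _ =>
      (continuous_apply i).comp ((hf.continuous_fderiv one_ne_zero).clm_apply continuous_const)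
    unfold diver
    rw [cube_eq_Icc, integral_divergence_of_hasFDerivAt_off_countable
      (a := 0) (b := 1) zero_le_one f (fderiv ℝ f) ∅ countable_empty
      hf.continuous.continuousOn
      (fun x _ => ((hf.differentiable one_ne_zero) x).hasFDerivAt) hdiv.integrableOn_Icc]
    refine Finset.sum_eq_zero fun i _ => sub_eq_zero.mpr ?_
    simp only [Pi.one_apply, Pi.zero_apply, hper.insertNth_one]

variable {v : (Fin n → ℝ) → (Fin n → ℝ)}

theorem integral_cube_dotp_advDeriv_self (hv : ContDiff ℝ 1 v) (hper : ZPeriodic v)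
    (hdiv : ∀ x, diver v x = 0) : ∫ x in cube n, dotp (v x) (advDeriv v v x) = 0 := by
  have hv₁ : Differentiable ℝ v := hv.differentiable one_ne_zero
  have hpointwise : ∀ x, dotp (v x) (advDeriv v v x)
      = 1 / 2 * diver (fun y => dotp (v y) (v y) • v y) x := fun x => by
    rw [diver_smul ((hv₁ x).dotp (hv₁ x)) (hv₁ x), hdiv, gradf_dotp_self (hv₁ x),
      dotp_advDeriv_self]
    simp only [dotp_eq_dotProduct, smul_dotProduct, dotProduct_comm (v x)]
    ring
  simp only [hpointwise, integral_const_mul]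
  rw [integral_cube_diver_eq_zero ((hv.dotp hv).fun_smul hv) fun x m => by simp only [hper x m],
    mul_zero]

theorem integral_cube_dotp_gradf {q : (Fin n → ℝ) → ℝ} (hv : ContDiff ℝ 1 v)
    (hq : ContDiff ℝ 1 q) (hvper : ZPeriodic v) (hqper : ZPeriodic q)
    (hdiv : ∀ x, diver v x = 0) : ∫ x in cube n, dotp (v x) (gradf q x) = 0 := by
  have hpointwise : ∀ x, dotp (v x) (gradf q x) = diver (fun y => q y • v y) x := fun x => by
    rw [diver_smul ((hq.differentiable one_ne_zero) x) ((hv.differentiable one_ne_zero) x), hdiv,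
      mul_zero, zero_add, dotp_eq_dotProduct, dotp_eq_dotProduct, dotProduct_comm]
  simp only [hpointwise]
  exact integral_cube_diver_eq_zero (hq.fun_smul hv) fun x m => by
    simp only [hvper x m, hqper x m]

theorem integral_cube_dotp_lap (hv : ContDiff ℝ 2 v) (hper : ZPeriodic v) :
    ∫ x in cube n, dotp (v x) (lap v x)
      = -∫ x in cube n,
          ∑ i, dotp (fderiv ℝ v x (Pi.single i 1)) (fderiv ℝ v x (Pi.single i 1)) := by
  have hdv : ∀ i : Fin n, ContDiff ℝ 1 (fun y => fderiv ℝ v y (Pi.single i 1)) := fun i =>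
    hv.fderiv_right_apply le_rfl _
  have hLS : ContDiff ℝ 1 (lineStretch v v) :=
    contDiff_pi.2 fun i => (hdv i).dotp (hv.of_le one_le_two)
  have hLSper : ZPeriodic (lineStretch v v) := fun x m => by
    funext i
    simp only [lineStretch_apply, hper x m, hper.fderiv x m]
  have hD : Continuous fun x =>
      ∑ i, dotp (fderiv ℝ v x (Pi.single i 1)) (fderiv ℝ v x (Pi.single i 1)) :=
    continuous_finsetSum _ fun i _ => (hdv i).continuous.dotProduct (hdv i).continuous
  have hdivLS : Continuous (diver (lineStretch v v)) := continuous_finsetSum _ fun i _ =>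
    (continuous_apply i).comp ((hLS.continuous_fderiv one_ne_zero).clm_apply continuous_const)
  simp only [fun x => eq_sub_of_add_eq' (diver_lineStretch_self hv x).symm]
  rw [integral_sub hdivLS.integrableOn_cube hD.integrableOn_cube,
    integral_cube_diver_eq_zero hLS hLSper, zero_sub]

theorem integral_cube_dotp_navierStokes {q : (Fin n → ℝ) → ℝ} (η : ℝ) (hv : ContDiff ℝ 2 v)
    (hq : ContDiff ℝ 1 q) (hvper : ZPeriodic v) (hqper : ZPeriodic q)
    (hdiv : ∀ x, diver v x = 0) :
    ∫ x in cube n, dotp (v x) (-advDeriv v v x - gradf q x + η • lap v x)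
      = -(η * ∫ x in cube n,
          ∑ i, dotp (fderiv ℝ v x (Pi.single i 1)) (fderiv ℝ v x (Pi.single i 1))) := by
  have hv₁ : ContDiff ℝ 1 v := hv.of_le one_le_two
  have hA : Continuous fun x => dotp (v x) (advDeriv v v x) :=
    hv.continuous.dotProduct ((hv₁.continuous_fderiv one_ne_zero).clm_apply hv.continuous)
  have hG : Continuous fun x => dotp (v x) (gradf q x) := hv.continuous.dotProduct
    (continuous_pi fun i => (hq.continuous_fderiv one_ne_zero).clm_apply continuous_const)
  have hL : Continuous fun x => dotp (v x) (lap v x) :=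
    hv.continuous.dotProduct (continuous_lap hv)
  have hpointwise : ∀ x, dotp (v x) (-advDeriv v v x - gradf q x + η • lap v x)
      = -dotp (v x) (advDeriv v v x) - dotp (v x) (gradf q x) + η * dotp (v x) (lap v x) :=
    fun x => by simp only [dotp_eq_dotProduct, dotProduct_add, dotProduct_sub, dotProduct_neg,
      dotProduct_smul, smul_eq_mul]
  simp only [hpointwise]
  rw [integral_add, integral_sub, integral_neg, integral_const_mul,
    integral_cube_dotp_advDeriv_self hv₁ hvper hdiv,
    integral_cube_dotp_gradf hv₁ hq hvper hqper hdiv, integral_cube_dotp_lap hv hvper]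
  · ring
  exacts [hA.neg.integrableOn_cube, hG.integrableOn_cube, (hA.neg.sub hG).integrableOn_cube,
    (hL.const_mul η).integrableOn_cube]

end Torus

section Slices

variable {E F : Type*} [NormedAddCommGroup E] [NormedSpace ℝ E] [NormedAddCommGroup F]
  [NormedSpace ℝ F] {s : Set ℝ} {U : ℝ × E → F}

theorem ContDiffOn.contDiff_comp_prodMk_right {k : WithTop ℕ∞} (hU : ContDiffOn ℝ k U (s ×ˢ univ))
    {t : ℝ} (ht : t ∈ s) : ContDiff ℝ k (fun y => U (t, y)) :=
  contDiffOn_univ.1 <| hU.comp (contDiff_const.prodMk contDiff_id).contDiffOn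
    fun y _ => mk_mem_prod ht (mem_univ y)

theorem DifferentiableOn.hasDerivWithinAt_comp_prodMk_left (hU : DifferentiableOn ℝ U (s ×ˢ univ))
    {t : ℝ} (ht : t ∈ s) (x : E) :
    HasDerivWithinAt (fun τ => U (τ, x)) (fderivWithin ℝ U (s ×ˢ univ) (t, x) (1, 0)) s t :=
  (hU (t, x) ⟨ht, trivial⟩).hasFDerivWithinAt.comp_hasDerivWithinAt t
    ((hasDerivWithinAt_id t s).prodMk (hasDerivWithinAt_const t s x))
    fun _ hτ => mk_mem_prod hτ (mem_univ x)

theorem ContDiffOn.continuousOn_derivWithin_comp_prodMk_left (hU : ContDiffOn ℝ 1 U (s ×ˢ univ))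
    (hs : UniqueDiffOn ℝ s) :
    ContinuousOn (fun z : ℝ × E => derivWithin (fun τ => U (τ, z.2)) s z.1) (s ×ˢ univ) := by
  refine ((hU.continuousOn_fderivWithin (hs.prod uniqueDiffOn_univ) le_rfl).clm_apply
    (continuousOn_const (c := ((1 : ℝ), (0 : E))))).congr fun z hz => ?_
  exact ((hU.differentiableOn one_ne_zero).hasDerivWithinAt_comp_prodMk_left hz.1 z.2).derivWithin
    (hs _ hz.1)

end Slices

theorem hasDerivWithinAt_half_setIntegral_dotp_self {n : ℕ} {T : ℝ} (hT : 0 < T)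
    {u : ℝ → (Fin n → ℝ) → (Fin n → ℝ)}
    (hu : ContDiffOn ℝ 1 (fun z : ℝ × (Fin n → ℝ) => u z.1 z.2) (Icc 0 T ×ˢ univ))
    {K : Set (Fin n → ℝ)} (hK : IsCompact K) (hKm : MeasurableSet K) {t : ℝ} (ht : t ∈ Icc 0 T) :
    HasDerivWithinAt (fun τ => (1 / 2 : ℝ) * ∫ x in K, dotp (u τ x) (u τ x))
      (∫ x in K, dotp (u t x) (derivWithin (fun τ => u τ x) (Icc 0 T) t)) (Icc 0 T) t := by
  have hdt : ∀ x, ∀ t ∈ Icc 0 T, HasDerivWithinAt (fun τ => u τ x)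
      (derivWithin (fun τ => u τ x) (Icc 0 T) t) (Icc 0 T) t := fun x t ht =>
    ((hu.differentiableOn one_ne_zero).hasDerivWithinAt_comp_prodMk_left ht x)
      |>.differentiableWithinAt.hasDerivWithinAt
  have hslice : ∀ t ∈ Icc 0 T, Continuous (u t) := fun t ht =>
    (hu.contDiff_comp_prodMk_right ht).continuous
  simp only [← integral_const_mul]
  exact hasDerivWithinAt_setIntegral_Icc hK hKm (fun x _ t ht => (hdt x t ht).half_dotp_self)
    ((hu.continuousOn.dotp (hu.continuousOn_derivWithin_comp_prodMk_left
      (uniqueDiffOn_Icc hT))).mono (prod_mono subset_rfl (subset_univ _)))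
    (fun t ht => ((continuous_const.mul ((hslice t ht).dotProduct
      (hslice t ht))).continuousOn.integrableOn_compact' hK hKm)) ht

/-- kinetic energy dissipation for smooth periodic solutions of
the incompressible Navier–Stokes equation:
`d/dt E_t = −η ∫ |Du|² ≤ 0`, and `E` is nonincreasing on `[0,T]`. -/
theorem stmt15 {n : ℕ} (η T : ℝ) (hη : 0 < η) (hT : 0 < T)
    (u : ℝ → (Fin n → ℝ) → (Fin n → ℝ)) (p : ℝ → (Fin n → ℝ) → ℝ)
    (hu : ContDiffOn ℝ (⊤:ℕ∞) (fun z : ℝ × (Fin n → ℝ) => u z.1 z.2)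
      (Set.Icc 0 T ×ˢ Set.univ))
    (hp : ContDiffOn ℝ (⊤:ℕ∞) (fun z : ℝ × (Fin n → ℝ) => p z.1 z.2)
      (Set.Icc 0 T ×ˢ Set.univ))
    (hup : ∀ t ∈ Set.Icc (0:ℝ) T, ZPeriodic (u t))
    (hpp : ∀ t ∈ Set.Icc (0:ℝ) T, ZPeriodic (p t))
    (hdivu : ∀ t ∈ Set.Icc (0:ℝ) T, ∀ x, diver (u t) x = 0)
    (hNSE : ∀ t ∈ Set.Icc (0:ℝ) T, ∀ x,
      derivWithin (fun τ => u τ x) (Set.Icc 0 T) t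
        = -advDeriv (u t) (u t) x - gradf (p t) x + η • lap (u t) x) :
    (∀ t ∈ Set.Icc (0:ℝ) T,
      HasDerivWithinAt (fun τ => (1/2 : ℝ) * ∫ x in cube n, dotp (u τ x) (u τ x))
        (-(η * ∫ x in cube n, ∑ i, dotp (fderiv ℝ (u t) x (Pi.single i 1))
              (fderiv ℝ (u t) x (Pi.single i 1))))
        (Set.Icc 0 T) t
      ∧ -(η * ∫ x in cube n, ∑ i, dotp (fderiv ℝ (u t) x (Pi.single i 1))
              (fderiv ℝ (u t) x (Pi.single i 1))) ≤ 0) ∧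
    (∀ t₁ ∈ Set.Icc (0:ℝ) T, ∀ t₂ ∈ Set.Icc (0:ℝ) T, t₁ ≤ t₂ →
      (1/2 : ℝ) * ∫ x in cube n, dotp (u t₂ x) (u t₂ x)
        ≤ (1/2 : ℝ) * ∫ x in cube n, dotp (u t₁ x) (u t₁ x)) := by
  have hut : ∀ t ∈ Icc 0 T, ContDiff ℝ 2 (u t) := fun t ht =>
    (hu.contDiff_comp_prodMk_right ht).of_le (WithTop.coe_le_coe.2 le_top)
  have hpt : ∀ t ∈ Icc 0 T, ContDiff ℝ 1 (p t) := fun t ht =>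
    (hp.contDiff_comp_prodMk_right ht).of_le (WithTop.coe_le_coe.2 le_top)
  have hderiv : ∀ t ∈ Icc 0 T, HasDerivWithinAt
      (fun τ => (1 / 2 : ℝ) * ∫ x in cube n, dotp (u τ x) (u τ x))
      (-(η * ∫ x in cube n, ∑ i, dotp (fderiv ℝ (u t) x (Pi.single i 1))
        (fderiv ℝ (u t) x (Pi.single i 1)))) (Icc 0 T) t := fun t ht => by
    have hE := hasDerivWithinAt_half_setIntegral_dotp_self hT
      (hu.of_le (WithTop.coe_le_coe.2 le_top)) (isCompact_cube n) (measurableSet_cube n) ht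
    simp only [hNSE t ht] at hE
    rwa [integral_cube_dotp_navierStokes η (hut t ht) (hpt t ht) (hup t ht) (hpp t ht)
      (hdivu t ht)] at hE
  have hnonpos : ∀ t, -(η * ∫ x in cube n, ∑ i, dotp (fderiv ℝ (u t) x (Pi.single i 1))
      (fderiv ℝ (u t) x (Pi.single i 1))) ≤ 0 := fun t =>
    neg_nonpos.2 <| mul_nonneg hη.le <| setIntegral_nonneg (measurableSet_cube n) fun x _ =>
      Finset.sum_nonneg fun i _ => dotp_self_nonneg _
  refine ⟨fun t ht => ⟨hderiv t ht, hnonpos t⟩, ?_⟩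
  exact antitoneOn_of_hasDerivWithinAt_nonpos (convex_Icc 0 T)
    (fun t ht => (hderiv t ht).continuousWithinAt)
    (fun t ht => (hderiv t (interior_subset ht)).mono interior_subset) (fun t _ => hnonpos t)
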